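/- Let Q be an acyclic quiver that is not of Dynkin type (ADE). Then gldim σ ≥ 1 for every stability condition σ on D^b(kQ); combined with the existence of a stability condition with gldim ≤ 1, the minimum of gldim on Stab D^b(kQ) equals 1. -/

import Mathlib

open CategoryTheory CategoryTheory.Limits CategoryTheory.Pretriangulated

universe v u

variable (C : Type u) [Category.{v} C] [Preadditive C] [HasZeroObject C]
  [HasShift C ℤ] [∀ n : ℤ, (shiftFunctor C n).Additive] [Pretriangulated C]
  [HasFiniteBiproducts C]

/-- A Bridgeland stability condition, encoded by a central charge on objects and a slicing. -/
structure StabilityCondition where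
  Z : C → ℂ
  P : ℝ → Set C
  mem_of_iso : ∀ {φ : ℝ} {E F : C}, (E ≅ F) → E ∈ P φ → F ∈ P φ
  charge : ∀ {φ : ℝ} {E : C}, E ∈ P φ → ¬ IsZero E →
    ∃ m : ℝ, 0 < m ∧ Z E = (m : ℂ) * Complex.exp (Real.pi * φ * Complex.I)
  shift_mem : ∀ (φ : ℝ) (E : C), E ∈ P φ ↔ E⟦(1 : ℤ)⟧ ∈ P (φ + 1)
  sum_mem : ∀ {φ : ℝ} {X Y : C}, X ∈ P φ → Y ∈ P φ → (X ⊞ Y) ∈ P φ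
  summand_mem : ∀ {φ : ℝ} {X Y : C}, (X ⊞ Y) ∈ P φ → X ∈ P φ
  hom_zero : ∀ {φ₁ φ₂ : ℝ}, φ₂ < φ₁ → ∀ {E F : C}, E ∈ P φ₁ → F ∈ P φ₂ →
    ∀ f : E ⟶ F, f = 0
  HN : ∀ E : C, ¬ IsZero E → ∃ (n : ℕ) (obj : Fin (n + 1) → C) (φ : Fin n → ℝ),
    IsZero (obj 0) ∧ Nonempty (obj (Fin.last n) ≅ E) ∧ StrictAnti φ ∧
    ∀ i : Fin n, ∃ (A : C) (f : obj i.castSucc ⟶ obj i.succ) (g : obj i.succ ⟶ A)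
      (h : A ⟶ (obj i.castSucc)⟦(1 : ℤ)⟧),
      (Triangle.mk f g h ∈ distTriang C) ∧ A ∈ P (φ i) ∧ ¬ IsZero A

variable {C}

/-- `E` is semistable iff it lies in some slice. -/
def StabilityCondition.IsSemistable (σ : StabilityCondition C) (E : C) : Prop :=
  ∃ φ : ℝ, E ∈ σ.P φ

/-- The global dimension of a stability condition. -/
noncomputable def StabilityCondition.gldim (σ : StabilityCondition C) : EReal :=
  sSup {d : EReal | ∃ (φ₁ φ₂ : ℝ) (E F : C) (f : E ⟶ F),
    E ∈ σ.P φ₁ ∧ F ∈ σ.P φ₂ ∧ f ≠ 0 ∧ d = ((φ₂ - φ₁ : ℝ) : EReal)}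

/-- An object is indecomposable if it is nonzero and any biproduct decomposition is trivial. -/
def IsIndec (E : C) : Prop :=
  ¬ IsZero E ∧ ∀ (X Y : C), (E ≅ X ⊞ Y) → IsZero X ∨ IsZero Y

/-- `E` is stable of phase `φ`: it is a nonzero object of `P(φ)` admitting no nontrivial
extension decomposition inside `P(φ)` (i.e. it is simple in the abelian category `P(φ)`). -/
def StabilityCondition.IsStableOfPhase (σ : StabilityCondition C) (E : C) (φ : ℝ) : Prop :=
  E ∈ σ.P φ ∧ ¬ IsZero E ∧ ∀ (A B : C) (f : A ⟶ E) (g : E ⟶ B) (h : B ⟶ A⟦(1 : ℤ)⟧),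
    (Triangle.mk f g h ∈ distTriang C) → A ∈ σ.P φ → B ∈ σ.P φ →
    ¬ IsZero A → ¬ IsZero B → False

/-- The Krull–Schmidt property: every nonzero object is a finite biproduct of indecomposables. -/
def KrullSchmidt : Prop :=
  ∀ X : C, ¬ IsZero X → ∃ (m : ℕ) (f : Fin m → C),
    (∀ i, IsIndec (f i)) ∧ Nonempty (X ≅ ⨁ f)

/-- `E` admits a finite filtration (tower of exact triangles) with factors in `X`. -/
def FiltrationBy (X : Set C) (E : C) : Prop :=
  ∃ (n : ℕ) (obj : Fin (n + 1) → C), IsZero (obj 0) ∧ Nonempty (obj (Fin.last n) ≅ E) ∧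
    ∀ i : Fin n, ∃ (A : C) (f : obj i.castSucc ⟶ obj i.succ) (g : obj i.succ ⟶ A)
      (w : A ⟶ (obj i.castSucc)⟦(1 : ℤ)⟧),
      (Triangle.mk f g w ∈ distTriang C) ∧ A ∈ X

/-- The data of a bounded heart in a triangulated category: a class of objects closed
under isomorphisms, biproducts and summands, with no negative self-extensions, not
meeting its own nonzero shifts, and filtering every object by its shifts with strictly
decreasing shift degrees. -/
structure IsBoundedHeart (H : Set C) : Prop where
  mem_of_iso : ∀ {A B : C}, (A ≅ B) → A ∈ H → B ∈ H
  sum_mem : ∀ {A B : C}, A ∈ H → B ∈ H → (A ⊞ B) ∈ H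
  summand_mem : ∀ {A B : C}, (A ⊞ B) ∈ H → A ∈ H
  neg_ext : ∀ A ∈ H, ∀ B ∈ H, ∀ k : ℤ, k < 0 → ∀ f : A ⟶ B⟦k⟧, f = 0
  disjoint_shift : ∀ A ∈ H, ∀ B ∈ H, ∀ k : ℤ, k ≠ 0 → (A ≅ B⟦k⟧) → IsZero A
  bounded : ∀ E : C, ¬ IsZero E → ∃ (n : ℕ) (obj : Fin (n + 1) → C) (m : Fin n → ℤ),
    IsZero (obj 0) ∧ Nonempty (obj (Fin.last n) ≅ E) ∧ StrictAnti m ∧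
    ∀ i : Fin n, ∃ (A : C) (f : obj i.castSucc ⟶ obj i.succ) (g : obj i.succ ⟶ A)
      (w : A ⟶ (obj i.castSucc)⟦(1 : ℤ)⟧),
      (Triangle.mk f g w ∈ distTriang C) ∧ (∃ B ∈ H, Nonempty (A ≅ B⟦m i⟧))

/-- A heart is hereditary if `Hom(H, H[k]) = 0` for all `k ≥ 2`. -/
def IsHereditary (H : Set C) : Prop :=
  ∀ A ∈ H, ∀ B ∈ H, ∀ k : ℤ, 2 ≤ k → ∀ f : A ⟶ B⟦k⟧, f = 0

/-- The heart has finitely many simples: there are finitely many objects `S i ∈ H` such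
that every nonzero object of `H` is filtered (inside `H`) by copies of the `S i`. -/
def HasFinitelyManySimples (H : Set C) : Prop :=
  ∃ (m : ℕ) (S : Fin m → C), (∀ i, S i ∈ H) ∧
    ∀ A ∈ H, ¬ IsZero A → FiltrationBy {X | ∃ i, Nonempty (X ≅ S i)} A

set_option linter.unusedSectionVars false

/-! If `gldim σ ≤ 1`, there are no nonzero maps from `P(φ₁)` to `P(φ₂)` when `φ₂ > φ₁ + 1`.
In the Harder–Narasimhan filtration of an indecomposable `E`, the last factor `A` has the smallest
phase, while every earlier factor shifted by one has phase bigger than `φ(A) + 1`; so the connecting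
morphism of the last triangle vanishes, the triangle splits, and `E ≅ A` is semistable. A nonzero
`E → E⟦1⟧` from a semistable `E` then forces `gldim σ ≥ 1`, a contradiction if `gldim σ < 1`.

For the upper bound, the hereditary heart `H` gives the stability condition whose phase-`n` slice
is `H⟦n⟧`; since `Hom(H, H⟦k⟧) = 0` for `k ≥ 2`, its global dimension is at most `1`. -/

lemma isZero_shift_iff (X : C) (n : ℤ) : IsZero (X⟦n⟧) ↔ IsZero X :=
  ⟨IsZero.of_full_of_faithful_of_isZero (shiftFunctor C n) X, (shiftFunctor C n).map_isZero⟩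

noncomputable def isoShiftSubOfShiftIso {X Y : C} {a b : ℤ} (e : X⟦a⟧ ≅ Y⟦b⟧) :
    X ≅ Y⟦b - a⟧ :=
  (shiftShiftNeg X a).symm ≪≫ (shiftFunctor C (-a)).mapIso e ≪≫
    ((shiftFunctorAdd' C b (-a) (b - a) (by ring)).app Y).symm

lemma hom_shift_eq_zero {X Y : C} {a b : ℤ} (hXY : ∀ g : X ⟶ Y⟦b - a⟧, g = 0)
    (u : X⟦a⟧ ⟶ Y⟦b⟧) : u = 0 := by
  let e : Y⟦b⟧⟦-a⟧ ≅ Y⟦b - a⟧ := ((shiftFunctorAdd' C b (-a) (b - a) (by ring)).app Y).symm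
  have h : (shiftShiftNeg X a).inv ≫ u⟦-a⟧' ≫ e.hom = 0 := hXY _
  apply (shiftFunctor C (-a)).map_injective
  rw [Functor.map_zero, ← cancel_epi (shiftShiftNeg X a).inv, ← cancel_mono e.hom,
    Category.assoc, h, comp_zero, zero_comp]

lemma hom_eq_zero_of_iso_shift {E F X Y : C} {a b : ℤ} (eE : E ≅ X⟦a⟧) (eF : F ≅ Y⟦b⟧)
    (hXY : ∀ g : X ⟶ Y⟦b - a⟧, g = 0) (f : E ⟶ F) : f = 0 := by
  have h : eE.inv ≫ f ≫ eF.hom = 0 := hom_shift_eq_zero hXY _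
  simpa using congrArg (eE.hom ≫ · ≫ eF.inv) h

lemma IsBoundedHeart.eq_of_shift_iso {H : Set C} (hH : IsBoundedHeart H) {B B' : C} {a b : ℤ}
    (hB : B ∈ H) (hB' : B' ∈ H) (hBz : ¬ IsZero B) (e : B⟦a⟧ ≅ B'⟦b⟧) : a = b := by
  by_contra hab
  exact hBz (hH.disjoint_shift B hB B' hB' (b - a) (by omega) (isoShiftSubOfShiftIso e))

lemma hom_eq_zero_of_distTriang {A : C} {T : Triangle C} (hT : T ∈ distTriang C)
    (h₁ : ∀ u : A ⟶ T.obj₁, u = 0) (h₃ : ∀ u : A ⟶ T.obj₃, u = 0) (u : A ⟶ T.obj₂) : u = 0 := by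
  obtain ⟨v, rfl⟩ := Triangle.coyoneda_exact₂ T hT u (h₃ _)
  rw [h₁ v, zero_comp]

def IsFiltrationStep (P : Set C) (X Y : C) : Prop :=
  ∃ (A : C) (f : X ⟶ Y) (g : Y ⟶ A) (h : A ⟶ X⟦(1 : ℤ)⟧),
    Triangle.mk f g h ∈ distTriang C ∧ A ∈ P

lemma IsFiltrationStep.mono {P Q : Set C} {X Y : C} (hPQ : P ⊆ Q)
    (h : IsFiltrationStep P X Y) : IsFiltrationStep Q X Y := by
  obtain ⟨A, f, g, w, hd, hA⟩ := h
  exact ⟨A, f, g, w, hd, hPQ hA⟩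

lemma IsFiltrationStep.of_iso_left {P : Set C} {X X' Y : C} (e : X' ≅ X)
    (h : IsFiltrationStep P X Y) : IsFiltrationStep P X' Y := by
  obtain ⟨A, f, g, w, hd, hA⟩ := h
  refine ⟨A, e.hom ≫ f, g, w ≫ e.inv⟦(1 : ℤ)⟧', isomorphic_distinguished _ hd _ ?_, hA⟩
  refine Triangle.isoMk _ _ e (Iso.refl _) (Iso.refl _) (Category.comp_id _)
    ((Category.comp_id _).trans (Category.id_comp _).symm) ?_
  change (w ≫ e.inv⟦(1 : ℤ)⟧') ≫ e.hom⟦(1 : ℤ)⟧' = 𝟙 A ≫ w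
  rw [Category.assoc, ← Functor.map_comp, e.inv_hom_id, CategoryTheory.Functor.map_id,
    Category.comp_id, Category.id_comp]

lemma hom_shift_eq_zero_of_filtration {A : C} {n : ℕ} {obj : Fin (n + 1) → C}
    (h0 : IsZero (obj 0))
    (hstep : ∀ i : Fin n, IsFiltrationStep {B | ∀ u : A ⟶ B⟦(1 : ℤ)⟧, u = 0}
      (obj i.castSucc) (obj i.succ))
    (j : Fin (n + 1)) (u : A ⟶ (obj j)⟦(1 : ℤ)⟧) : u = 0 := by
  induction j using Fin.induction with
  | zero => exact ((isZero_shift_iff _ 1).2 h0).eq_of_tgt _ _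
  | succ i ih =>
    obtain ⟨B, f, g, w, hd, hB⟩ := hstep i
    exact hom_eq_zero_of_distTriang (Triangle.shift_distinguished _ hd 1) ih hB u

lemma exists_filtration_nonzero_factors (P : ℝ → Set C) {n : ℕ} (obj : Fin (n + 1) → C)
    (φ : Fin n → ℝ) (hφ : StrictAnti φ)
    (hstep : ∀ i, IsFiltrationStep (P (φ i)) (obj i.castSucc) (obj i.succ)) :
    ∃ (n' : ℕ) (obj' : Fin (n' + 1) → C) (φ' : Fin n' → ℝ), obj' 0 = obj 0 ∧
      Nonempty (obj' (Fin.last n') ≅ obj (Fin.last n)) ∧ StrictAnti φ' ∧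
      (∀ j, ∃ i, φ' j = φ i) ∧
      ∀ i, IsFiltrationStep (P (φ' i) ∩ {A | ¬ IsZero A}) (obj' i.castSucc) (obj' i.succ) := by
  induction n with
  | zero =>
    exact ⟨0, obj, φ, rfl, ⟨Iso.refl _⟩, fun i => i.elim0, fun j => j.elim0, fun i => i.elim0⟩
  | succ n ih =>
    obtain ⟨n', obj', φ', h0, ⟨elast⟩, hφ', hrange, hstep'⟩ :=
      ih (fun j => obj j.castSucc) (fun i => φ i.castSucc)
        (fun _ _ hij => hφ (Fin.castSucc_lt_castSucc_iff.2 hij)) (fun i => hstep i.castSucc)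
    obtain ⟨A, f, g, w, hd, hA⟩ := hstep (Fin.last n)
    by_cases hAz : IsZero A
    -- a zero cone means the last map is an isomorphism, so the step can be dropped
    · have : IsIso f := (Triangle.isZero₃_iff_isIso₁ _ hd).1 hAz
      exact ⟨n', obj', φ', h0, ⟨elast ≪≫ asIso f⟩, hφ',
        fun j => let ⟨k, hk⟩ := hrange j; ⟨k.castSucc, hk⟩, hstep'⟩
    refine ⟨n' + 1, Fin.snoc obj' (obj (Fin.last (n + 1))), Fin.snoc φ' (φ (Fin.last n)),
      by simpa using h0, ⟨eqToIso (Fin.snoc_last _ _)⟩, ?_, ?_, ?_⟩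
    · intro a b hab
      rcases Fin.eq_castSucc_or_eq_last a with ⟨a, rfl⟩ | rfl
      · rcases Fin.eq_castSucc_or_eq_last b with ⟨b, rfl⟩ | rfl
        · simpa using hφ' (Fin.castSucc_lt_castSucc_iff.1 hab)
        · obtain ⟨k, hk⟩ := hrange a
          simpa [hk] using hφ (Fin.castSucc_lt_last k)
      · exact absurd hab (not_lt.2 (Fin.le_last b))
    · intro j
      rcases Fin.eq_castSucc_or_eq_last j with ⟨j, rfl⟩ | rfl
      · obtain ⟨k, hk⟩ := hrange j
        exact ⟨k.castSucc, by simpa using hk⟩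
      · exact ⟨Fin.last n, by simp⟩
    · intro i
      rcases Fin.eq_castSucc_or_eq_last i with ⟨i, rfl⟩ | rfl
      · rw [Fin.succ_castSucc, Fin.snoc_castSucc, Fin.snoc_castSucc, Fin.snoc_castSucc]
        exact hstep' i
      · simpa using (show IsFiltrationStep (P (φ (Fin.last n)) ∩ {A | ¬ IsZero A}) _ _ from
          ⟨A, f, g, w, hd, hA, hAz⟩).of_iso_left elast

namespace StabilityCondition

variable (σ : StabilityCondition C)

lemma le_gldim {φ₁ φ₂ : ℝ} {E F : C} (hE : E ∈ σ.P φ₁) (hF : F ∈ σ.P φ₂) {f : E ⟶ F}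
    (hf : f ≠ 0) : ((φ₂ - φ₁ : ℝ) : EReal) ≤ σ.gldim :=
  le_sSup ⟨φ₁, φ₂, E, F, f, hE, hF, hf, rfl⟩

lemma hom_eq_zero_of_gldim_le {d : ℝ} (hσ : σ.gldim ≤ d) {φ₁ φ₂ : ℝ} (hφ : φ₁ + d < φ₂)
    {E F : C} (hE : E ∈ σ.P φ₁) (hF : F ∈ σ.P φ₂) (f : E ⟶ F) : f = 0 := by
  by_contra hf
  have := EReal.coe_le_coe_iff.1 ((σ.le_gldim hE hF hf).trans hσ)
  linarith

lemma one_le_gldim_of_hom_shift {φ : ℝ} {E : C} (hE : E ∈ σ.P φ) {f : E ⟶ E⟦(1 : ℤ)⟧}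
    (hf : f ≠ 0) : 1 ≤ σ.gldim := by
  simpa using σ.le_gldim hE ((σ.shift_mem φ E).1 hE) hf

lemma isSemistable_of_isIndec (hσ : σ.gldim ≤ 1) {E : C} (hE : IsIndec E) :
    σ.IsSemistable E := by
  obtain ⟨hEz, hind⟩ := hE
  obtain ⟨n, obj, φ, h0, ⟨elast⟩, hφ, hstep⟩ := σ.HN E hEz
  cases n with
  | zero => exact absurd (h0.of_iso elast.symm) hEz
  | succ m =>
    obtain ⟨A, f, g, h, hd, hA, hAz⟩ := hstep (Fin.last m)
    -- the earlier factors, shifted by one, have phase `> φ (Fin.last m) + 1`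
    have hh : h = 0 := by
      refine hom_shift_eq_zero_of_filtration (obj := fun j => obj j.castSucc) h0 (fun i => ?_)
        (Fin.last m) h
      obtain ⟨B, f', g', w', hd', hB, -⟩ := hstep i.castSucc
      refine ⟨B, f', g', w', hd', fun u => σ.hom_eq_zero_of_gldim_le (by rwa [EReal.coe_one]) ?_
        hA ((σ.shift_mem _ B).1 hB) u⟩
      linarith [hφ (Fin.castSucc_lt_last i)]
    obtain ⟨e, -, -⟩ := exists_iso_binaryBiproduct_of_distTriang _ hd hh
    have eE : E ≅ obj (Fin.last m).castSucc ⊞ A := elast.symm ≪≫ e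
    rcases hind _ _ eE with hL | hR
    · exact ⟨φ (Fin.last m), σ.mem_of_iso (eE ≪≫ (isoZeroBiprod hL).symm).symm hA⟩
    · exact absurd hR hAz

lemma one_le_gldim (hselfext : ∃ E : C, IsIndec E ∧ ∃ f : E ⟶ E⟦(1 : ℤ)⟧, f ≠ 0) :
    1 ≤ σ.gldim := by
  obtain ⟨E, hE, f, hf⟩ := hselfext
  by_contra hlt
  obtain ⟨φ, hφ⟩ := σ.isSemistable_of_isIndec (not_le.1 hlt).le hE
  exact hlt (σ.one_le_gldim_of_hom_shift hφ hf)

end StabilityCondition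

def heartSlicing (H : Set C) (φ : ℝ) : Set C :=
  {E | IsZero E ∨ ∃ n : ℤ, φ = n ∧ ∃ B ∈ H, Nonempty (E ≅ B⟦n⟧)}

section heartSlicing

attribute [local instance] preservesBinaryBiproducts_of_preservesBiproducts

variable {H : Set C}

lemma heartSlicing_mem_of_iso {φ : ℝ} {E F : C} (e : E ≅ F) (hE : E ∈ heartSlicing H φ) :
    F ∈ heartSlicing H φ := by
  rcases hE with hEz | ⟨n, hn, B, hB, ⟨eB⟩⟩
  · exact Or.inl (hEz.of_iso e.symm)
  · exact Or.inr ⟨n, hn, B, hB, ⟨e.symm ≪≫ eB⟩⟩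

lemma mem_heartSlicing_iff_shift_mem (φ : ℝ) (E : C) :
    E ∈ heartSlicing H φ ↔ E⟦(1 : ℤ)⟧ ∈ heartSlicing H (φ + 1) := by
  constructor
  · rintro (hEz | ⟨n, rfl, B, hB, ⟨eB⟩⟩)
    · exact Or.inl ((isZero_shift_iff E 1).2 hEz)
    · exact Or.inr ⟨n + 1, by push_cast; ring, B, hB,
        ⟨(shiftFunctor C (1 : ℤ)).mapIso eB ≪≫ ((shiftFunctorAdd' C n 1 (n + 1) rfl).app B).symm⟩⟩
  · rintro (hEz | ⟨n, hn, B, hB, ⟨eB⟩⟩)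
    · exact Or.inl ((isZero_shift_iff E 1).1 hEz)
    · exact Or.inr ⟨n - 1, by push_cast; linarith, B, hB, ⟨isoShiftSubOfShiftIso eB⟩⟩

lemma heartSlicing_sum_mem (hH : IsBoundedHeart H) {φ : ℝ} {X Y : C}
    (hX : X ∈ heartSlicing H φ) (hY : Y ∈ heartSlicing H φ) : (X ⊞ Y) ∈ heartSlicing H φ := by
  rcases hX with hXz | ⟨n, rfl, B, hB, ⟨eB⟩⟩
  · exact heartSlicing_mem_of_iso (isoZeroBiprod hXz) hY
  rcases hY with hYz | ⟨n', hn', B', hB', ⟨eB'⟩⟩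
  · exact Or.inr ⟨n, rfl, B, hB, ⟨(isoBiprodZero hYz).symm ≪≫ eB⟩⟩
  obtain rfl : n' = n := by exact_mod_cast hn'.symm
  exact Or.inr ⟨n', rfl, B ⊞ B', hH.sum_mem hB hB',
    ⟨biprod.mapIso eB eB' ≪≫ ((shiftFunctor C n').mapBiprod B B').symm⟩⟩

lemma heartSlicing_summand_mem (hH : IsBoundedHeart H) {φ : ℝ} {X Y : C}
    (hXY : (X ⊞ Y) ∈ heartSlicing H φ) : X ∈ heartSlicing H φ := by
  rcases hXY with hz | ⟨n, hn, B, hB, ⟨e⟩⟩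
  · exact Or.inl (hz.of_mono biprod.inl)
  · have hmem : (X⟦-n⟧ ⊞ Y⟦-n⟧) ∈ H := hH.mem_of_iso ((shiftShiftNeg B n).symm ≪≫
      (shiftFunctor C (-n)).mapIso e.symm ≪≫ (shiftFunctor C (-n)).mapBiprod X Y) hB
    exact Or.inr ⟨n, hn, X⟦-n⟧, hH.summand_mem hmem, ⟨(shiftNegShift X n).symm⟩⟩

lemma heartSlicing_hom_eq_zero {φ₁ φ₂ : ℝ} {E F : C} (hE : E ∈ heartSlicing H φ₁)
    (hF : F ∈ heartSlicing H φ₂)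
    (hvan : ∀ n₁ n₂ : ℤ, φ₁ = n₁ → φ₂ = n₂ → ∀ A ∈ H, ∀ B ∈ H, ∀ g : A ⟶ B⟦n₂ - n₁⟧, g = 0)
    (f : E ⟶ F) : f = 0 := by
  rcases hE with hEz | ⟨n₁, h₁, B₁, hB₁, ⟨e₁⟩⟩
  · exact hEz.eq_of_src f 0
  rcases hF with hFz | ⟨n₂, h₂, B₂, hB₂, ⟨e₂⟩⟩
  · exact hFz.eq_of_tgt f 0
  exact hom_eq_zero_of_iso_shift e₁ e₂ (hvan n₁ n₂ h₁ h₂ B₁ hB₁ B₂ hB₂) f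

end heartSlicing

-- `StabilityCondition` does not ask `Z` to be additive, so each nonzero `B⟦n⟧` with `B ∈ H` may
-- be given the charge `exp (iπn)`; `IsBoundedHeart.eq_of_shift_iso` makes `n` well defined.
open Classical in
noncomputable def heartCharge (H : Set C) (E : C) : ℂ :=
  if h : ∃ n : ℤ, ∃ B ∈ H, ¬ IsZero B ∧ Nonempty (E ≅ B⟦n⟧) then
    Complex.exp (Real.pi * (h.choose : ℂ) * Complex.I)
  else 0

section heartStab

variable {H : Set C}

lemma heartCharge_eq (hH : IsBoundedHeart H) {φ : ℝ} {E : C} (hE : E ∈ heartSlicing H φ)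
    (hEz : ¬ IsZero E) :
    heartCharge H E = Complex.exp (Real.pi * φ * Complex.I) := by
  obtain hEz' | ⟨n, rfl, B, hB, ⟨eB⟩⟩ := hE
  · exact absurd hEz' hEz
  have hBz : ¬ IsZero B := fun hBz => hEz (((isZero_shift_iff B n).2 hBz).of_iso eB)
  have hex : ∃ n : ℤ, ∃ B ∈ H, ¬ IsZero B ∧ Nonempty (E ≅ B⟦n⟧) := ⟨n, B, hB, hBz, ⟨eB⟩⟩
  obtain ⟨B', hB', hB'z, ⟨eB'⟩⟩ := hex.choose_spec
  rw [heartCharge, dif_pos hex, hH.eq_of_shift_iso hB' hB hB'z (eB'.symm ≪≫ eB)]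
  push_cast
  rfl

lemma exists_HN_filtration_heartSlicing (hH : IsBoundedHeart H) (E : C) (hEz : ¬ IsZero E) :
    ∃ (n : ℕ) (obj : Fin (n + 1) → C) (φ : Fin n → ℝ),
      IsZero (obj 0) ∧ Nonempty (obj (Fin.last n) ≅ E) ∧ StrictAnti φ ∧
      ∀ i, IsFiltrationStep (heartSlicing H (φ i) ∩ {A | ¬ IsZero A})
        (obj i.castSucc) (obj i.succ) := by
  obtain ⟨n, obj, m, h0, ⟨elast⟩, hm, hstep⟩ := hH.bounded E hEz
  obtain ⟨n', obj', φ', h0', ⟨elast'⟩, hφ', -, hstep'⟩ :=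
    exists_filtration_nonzero_factors (heartSlicing H) obj (fun i => (m i : ℝ))
      (fun _ _ hij => Int.cast_lt.2 (hm hij))
      (fun i => let ⟨A, f, g, w, hd, B, hB, eB⟩ := hstep i
        ⟨A, f, g, w, hd, Or.inr ⟨m i, rfl, B, hB, eB⟩⟩)
  exact ⟨n', obj', φ', h0' ▸ h0, ⟨elast' ≪≫ elast⟩, hφ', hstep'⟩

noncomputable def heartStab (hH : IsBoundedHeart H) : StabilityCondition C where
  Z := heartCharge H
  P := heartSlicing H
  mem_of_iso := heartSlicing_mem_of_iso
  charge hE hEz := ⟨1, one_pos, by rw [heartCharge_eq hH hE hEz, Complex.ofReal_one, one_mul]⟩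
  shift_mem := mem_heartSlicing_iff_shift_mem
  sum_mem := heartSlicing_sum_mem hH
  summand_mem := heartSlicing_summand_mem hH
  hom_zero hφ _ _ hE hF := heartSlicing_hom_eq_zero hE hF fun n₁ n₂ h₁ h₂ A hA B hB =>
    hH.neg_ext A hA B hB _ (by have : (n₂ : ℝ) < n₁ := h₂ ▸ h₁ ▸ hφ; exact_mod_cast sub_neg.2 this)
  HN := exists_HN_filtration_heartSlicing hH

lemma gldim_heartStab_le_one (hH : IsBoundedHeart H) (hhered : IsHereditary H) :
    (heartStab hH).gldim ≤ 1 := by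
  refine sSup_le ?_
  rintro _ ⟨φ₁, φ₂, E, F, f, hE, hF, hf, rfl⟩
  by_contra hlt
  rw [not_le, ← EReal.coe_one, EReal.coe_lt_coe_iff] at hlt
  refine hf (heartSlicing_hom_eq_zero hE hF (fun n₁ n₂ h₁ h₂ A hA B hB => ?_) f)
  refine hhered A hA B hB _ ?_
  have : (1 : ℝ) < n₂ - n₁ := h₁ ▸ h₂ ▸ hlt
  have : 1 < n₂ - n₁ := by exact_mod_cast this
  omega

end heartStab

theorem gldim_min_eq_one_of_nonDynkin_general (H : Set C)
    (hheart : IsBoundedHeart (C := C) H)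
    (hhered : IsHereditary (C := C) H)
    (hselfext : ∃ E : C, IsIndec E ∧ ∃ f : E ⟶ E⟦(1 : ℤ)⟧, f ≠ 0) :
    (∀ σ : StabilityCondition C, (1 : EReal) ≤ σ.gldim) ∧
      ∃ σ : StabilityCondition C, σ.gldim = 1 :=
  ⟨fun σ => σ.one_le_gldim hselfext, heartStab hheart,
    le_antisymm (gldim_heartStab_le_one hheart hhered) ((heartStab hheart).one_le_gldim hselfext)⟩

/-- For an acyclic non-Dynkin quiver `Q`, `D^b(kQ)` has a finite hereditary heart and an
indecomposable object with nontrivial self-extension; consequently every stability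
condition `σ` satisfies `gldim σ ≥ 1`, and the minimum of `gldim` equals `1`. -/
theorem gldim_min_eq_one_of_nonDynkin (H : Set C)
    (hheart : IsBoundedHeart (C := C) H)
    (hhered : IsHereditary (C := C) H)
    (hfin : HasFinitelyManySimples (C := C) H)
    (hselfext : ∃ E : C, IsIndec E ∧ ∃ f : E ⟶ E⟦(1 : ℤ)⟧, f ≠ 0) :
    (∀ σ : StabilityCondition C, (1 : EReal) ≤ σ.gldim) ∧
      ∃ σ : StabilityCondition C, σ.gldim = 1 :=
  gldim_min_eq_one_of_nonDynkin_general H hheart hhered hselfext
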